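/- If exactly one smoothness indicator β_m is bounded (β_m ≤ M) while all others satisfy β_k ≥ B, then as B → ∞ (with ε, M fixed) the renormalized indicator χ_m tends to 1; consequently, for B sufficiently large the TENO selection with any fixed C_T < 1 retains only stencil m (δ_m = 1, δ_k = 0 for k ≠ m), enforcing the ENO property. -/
import Mathlib


/-- If exactly one smoothness indicator `β_m` is bounded (`β_m ≤ M`) while all others
satisfy `β_k ≥ B`, then as `B → ∞` (with `ε`, `M` fixed) the renormalized indicator
`χ_m` tends to `1`; consequently, for `B` sufficiently large, the TENO selection with
any fixed `C_T < 1` retains only stencil `m` (`δ_m = 1`, `δ_k = 0` for `k ≠ m`). -/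
theorem teno_eno_property (K : ℕ) (hK : 1 ≤ K) (ε M : ℝ) (hε : 0 < ε) (hM : 0 ≤ M)
    (m : Fin (K + 1))
    (γ : (Fin (K + 1) → ℝ) → Fin (K + 1) → ℝ)
    (hγ : ∀ β k, γ β k = 1 / (β k + ε) ^ 6)
    (χ : (Fin (K + 1) → ℝ) → Fin (K + 1) → ℝ)
    (hχ : ∀ β k, χ β k = γ β k / ∑ j, γ β j)
    (CT : ℝ) (hCT0 : 0 < CT) (hCT1 : CT < 1)
    (δ : (Fin (K + 1) → ℝ) → Fin (K + 1) → ℝ)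
    (hδ : ∀ β k, δ β k = if CT ≤ χ β k then 1 else 0) :
    (∀ η > 0, ∃ B0 : ℝ, ∀ B ≥ B0, ∀ β : Fin (K + 1) → ℝ, (∀ k, 0 ≤ β k) →
      β m ≤ M → (∀ k, k ≠ m → B ≤ β k) → |χ β m - 1| < η) ∧
    (∃ B0 : ℝ, ∀ B ≥ B0, ∀ β : Fin (K + 1) → ℝ, (∀ k, 0 ≤ β k) →
      β m ≤ M → (∀ k, k ≠ m → B ≤ β k) →
      δ β m = 1 ∧ ∀ k, k ≠ m → δ β k = 0) := by
  set A : ℝ := (K : ℝ) * (M + ε) ^ 6 with hAdef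
  have hMε : (0:ℝ) < (M + ε) ^ 6 := by positivity
  have hA0 : 0 ≤ A := by positivity
  have hK1 : (1:ℝ) ≤ (K:ℝ) := by exact_mod_cast hK
  -- Key quantitative lemma
  have key : ∀ B : ℝ, 1 ≤ B → ∀ β : Fin (K + 1) → ℝ, (∀ k, 0 ≤ β k) →
      β m ≤ M → (∀ k, k ≠ m → B ≤ β k) →
      (χ β m ≤ 1 ∧ 1 - A / B ≤ χ β m ∧
        ∀ k, k ≠ m → 0 ≤ χ β k ∧ χ β k ≤ A / B) := by
    intro B hB β hb hbm hbk
    have hB0 : (0:ℝ) < B := lt_of_lt_of_le one_pos hB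
    have hγpos : ∀ j, 0 < γ β j := by
      intro j
      rw [hγ]
      have : 0 < β j + ε := by linarith [hb j]
      positivity
    have hSumPos : 0 < ∑ j, γ β j :=
      Finset.sum_pos (fun j _ => hγpos j) Finset.univ_nonempty
    have hγmle : γ β m ≤ ∑ j, γ β j :=
      Finset.single_le_sum (fun j _ => (hγpos j).le) (Finset.mem_univ m)
    have hQm : (β m + ε) ^ 6 ≤ (M + ε) ^ 6 :=
      pow_le_pow_left₀ (by linarith [hb m]) (by linarith) 6
    have hγm_lb : 1 / (M + ε) ^ 6 ≤ γ β m := by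
      rw [hγ]
      have hbmε : 0 < β m + ε := by linarith [hb m]
      exact one_div_le_one_div_of_le (pow_pos hbmε 6) hQm
    have hP : (0:ℝ) < (B + ε) ^ 6 := by positivity
    have hBP : B ≤ (B + ε) ^ 6 :=
      le_trans (by linarith) (le_self_pow₀ (by linarith) (by norm_num))
    have hγk_ub : ∀ k, k ≠ m → γ β k ≤ 1 / B := by
      intro k hkm
      rw [hγ]
      have h1 : B ≤ (β k + ε) ^ 6 :=
        le_trans hBP (pow_le_pow_left₀ (by linarith) (by linarith [hbk k hkm]) 6)
      exact one_div_le_one_div_of_le hB0 h1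
    set S : ℝ := ∑ j ∈ Finset.univ.erase m, γ β j with hSdef
    have hS0 : 0 ≤ S := Finset.sum_nonneg (fun j _ => (hγpos j).le)
    have hcard : (Finset.univ.erase m).card = K := by
      rw [Finset.card_erase_of_mem (Finset.mem_univ m), Finset.card_univ,
        Fintype.card_fin]
      omega
    have hS_ub : S ≤ (K : ℝ) / B := by
      calc S ≤ ∑ _j ∈ Finset.univ.erase m, 1 / B :=
            Finset.sum_le_sum (fun j hj => hγk_ub j (Finset.ne_of_mem_erase hj))
        _ = (K : ℝ) * (1 / B) := by
            rw [Finset.sum_const, hcard, nsmul_eq_mul]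
        _ = (K : ℝ) / B := by ring
    have hsplit : ∑ j, γ β j = γ β m + S :=
      (Finset.add_sum_erase _ _ (Finset.mem_univ m)).symm
    have h1 : 1 ≤ (M + ε) ^ 6 * γ β m := by
      have := (div_le_iff₀ hMε).mp hγm_lb
      linarith
    have hKA : (K : ℝ) ≤ A * γ β m := by
      rw [hAdef]
      nlinarith [mul_le_mul_of_nonneg_left h1 (le_trans zero_le_one hK1)]
    have hAγm : (K : ℝ) / B ≤ A / B * γ β m := by
      rw [div_mul_eq_mul_div]
      exact (div_le_div_iff_of_pos_right hB0).mpr hKA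
    refine ⟨?_, ?_, ?_⟩
    · rw [hχ]
      exact (div_le_one hSumPos).mpr hγmle
    · rw [hχ, hsplit]
      rw [le_div_iff₀ (by rw [← hsplit]; exact hSumPos)]
      have hASm : S ≤ A / B * γ β m := le_trans hS_ub hAγm
      have hAS : 0 ≤ A / B * S := mul_nonneg (by positivity) hS0
      nlinarith
    · intro k hkm
      constructor
      · rw [hχ]
        exact div_nonneg (hγpos k).le hSumPos.le
      · rw [hχ, div_le_iff₀ hSumPos]
        have h2 : γ β k ≤ 1 / B := hγk_ub k hkm
        have h3 : (1:ℝ) / B ≤ (K : ℝ) / B := (div_le_div_iff_of_pos_right hB0).mpr hK1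
        have h4 : A / B * γ β m ≤ A / B * ∑ j, γ β j :=
          mul_le_mul_of_nonneg_left hγmle (by positivity)
        nlinarith [hAγm]
    -- end key
  have exB0 : ∀ c : ℝ, 0 < c → ∃ B0 : ℝ, 1 ≤ B0 ∧ ∀ B ≥ B0, A / B < c := by
    intro c hc
    refine ⟨max 1 (A / c + 1), le_max_left _ _, fun B hB => ?_⟩
    have h1 : (1:ℝ) ≤ B := le_trans (le_max_left _ _) hB
    have h2 : A / c + 1 ≤ B := le_trans (le_max_right _ _) hB
    have hB0 : (0:ℝ) < B := by linarith
    rw [div_lt_iff₀ hB0]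
    have : A / c < B := by linarith
    rw [div_lt_iff₀ hc] at this
    linarith [this]
  constructor
  · intro η hη
    obtain ⟨B0, hB01, hB0⟩ := exB0 η hη
    refine ⟨B0, fun B hB β hb hbm hbk => ?_⟩
    obtain ⟨hle1, hlb, _⟩ := key B (le_trans hB01 hB) β hb hbm hbk
    have hAB := hB0 B hB
    rw [abs_sub_comm, abs_of_nonneg (by linarith)]
    linarith
  · obtain ⟨B0, hB01, hB0⟩ := exB0 (min CT (1 - CT)) (by
      apply lt_min hCT0; linarith)
    refine ⟨B0, fun B hB β hb hbm hbk => ?_⟩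
    obtain ⟨hle1, hlb, hk⟩ := key B (le_trans hB01 hB) β hb hbm hbk
    have hAB := hB0 B hB
    have hAB1 : A / B < 1 - CT := lt_of_lt_of_le hAB (min_le_right _ _)
    have hAB2 : A / B < CT := lt_of_lt_of_le hAB (min_le_left _ _)
    constructor
    · rw [hδ, if_pos (by linarith)]
    · intro k hkm
      obtain ⟨_, hub⟩ := hk k hkm
      rw [hδ, if_neg (by push_neg; linarith)]
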